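/- arXiv:2204.10819 — 2 statements merged into one kernel-verified Lean document; each statement's English description precedes it below -/
import Mathlib

section
/- For distinct rational vectors χ_1, ..., χ_k ∈ Q^k that are Vandermonde vectors (χ_i = (1, a_i, ..., a_i^{k-1}) for distinct a_i), the lifted wedge product (u_1 ∧ w_1) ∧ ... ∧ (u_k ∧ w_k), with u_i = (χ_i, 0) and w_i = (0, χ_i), equals c · e_{[2k]} for a scalar c whose sign (-1)^{k(k-1)/2}-normalized value det(χ_1|...|χ_k)^2 is strictly positive. In particular, a sum of such lifted products over distinct tuples of Vandermonde vectors is never zero. -/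
/-!
Moving each `ι wᵢ` to the right past `ι uᵢ₊₁, …, ι u_k` costs `k - i` sign changes, so
`(u₁ ∧ w₁) ∧ ⋯ ∧ (u_k ∧ w_k) = (-1)^(k choose 2) (u₁ ∧ ⋯ ∧ u_k) ∧ (w₁ ∧ ⋯ ∧ w_k)`.
The `uᵢ` are the images of the `χᵢ` under a linear embedding onto the first block of coordinates,
so their wedge is `det(χ₁|⋯|χ_k)` times the wedge of that block's basis vectors; likewise for the
`wᵢ` and the second block. Hence `c = (-1)^(k choose 2) det²`, and the Vandermonde determinant of
distinct parameters is nonzero.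
-/

theorem AlternatingMap.map_eq_basis_det_smul {R M N ι : Type*} [CommRing R] [AddCommGroup M]
    [Module R M] [AddCommGroup N] [Module R N] [Fintype ι] [DecidableEq ι]
    (e : Module.Basis ι R M) (f : M [⋀^ι]→ₗ[R] N) (v : ι → M) :
    f v = e.det v • f e := by
  suffices f = e.det.smulRight (f e) from DFunLike.congr_fun this v
  refine e.ext_alternating fun g hg => ?_
  let σ : Equiv.Perm ι := Equiv.ofBijective g (Finite.injective_iff_bijective.1 hg)
  change f (e ∘ σ) = e.det (e ∘ σ) • f e
  rw [AlternatingMap.map_perm, AlternatingMap.map_perm, e.det_self, smul_assoc, one_smul]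

namespace Fin

variable {R M : Type*} [Semiring R] [AddCommMonoid M] [Module R M] {m n : ℕ}

def appendLinearMap : (Fin m → M) × (Fin n → M) →ₗ[R] Fin (m + n) → M where
  toFun p := append p.1 p.2
  map_add' p q := by
    ext i
    refine addCases (fun j => ?_) (fun j => ?_) i <;> simp
  map_smul' c p := by
    ext i
    refine addCases (fun j => ?_) (fun j => ?_) i <;> simp

@[simp]
theorem appendLinearMap_apply (p : (Fin m → M) × (Fin n → M)) :
    appendLinearMap (R := R) p = append p.1 p.2 :=
  rfl

theorem append_single_zero (j : Fin m) (x : M) :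
    append (Pi.single j x) (0 : Fin n → M) = Pi.single (castAdd n j) x := by
  ext i
  refine addCases (fun i => ?_) (fun i => ?_) i <;> simp [Pi.single_apply, Fin.ext_iff]
  omega

theorem append_zero_single (j : Fin n) (x : M) :
    append (0 : Fin m → M) (Pi.single j x) = Pi.single (natAdd m j) x := by
  ext i
  refine addCases (fun i => ?_) (fun i => ?_) i <;> simp [Pi.single_apply, Fin.ext_iff]
  omega

end Fin

namespace ExteriorAlgebra

variable {R M : Type*} [CommRing R] [AddCommGroup M] [Module R M]

theorem ι_mul_ιMulti_comm (x : M) {n : ℕ} (v : Fin n → M) :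
    ι R x * ιMulti R n v = (-1 : R) ^ n • (ιMulti R n v * ι R x) := by
  induction n with
  | zero => simp
  | succ n ih =>
    rw [ιMulti_succ_apply, ← mul_assoc, ← neg_eq_of_add_eq_zero_left (ι_add_mul_swap x (v 0)),
      neg_mul, mul_assoc, ih, mul_smul_comm, ← mul_assoc, pow_succ]
    module

theorem prod_ofFn_ι_mul_ι {k : ℕ} (u w : Fin k → M) :
    (List.ofFn fun i => ι R (u i) * ι R (w i)).prod =
      (-1 : R) ^ k.choose 2 • (ιMulti R k u * ιMulti R k w) := by
  induction k with
  | zero => simp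
  | succ k ih =>
    rw [List.ofFn_succ, List.prod_cons, ih, ιMulti_succ_apply, ιMulti_succ_apply,
      Nat.choose_succ_succ', Nat.choose_one_right, pow_add, mul_smul, mul_smul_comm, mul_assoc,
      ← mul_assoc (ι R (w 0)), ι_mul_ιMulti_comm, smul_mul_assoc, mul_smul_comm]
    simp only [mul_assoc]
    exact smul_comm _ _ _

theorem ιMulti_comp_linearMap_eq_det_smul {n : ℕ} (f : (Fin n → R) →ₗ[R] M)
    (v : Fin n → Fin n → R) :
    ιMulti R n (fun i => f (v i)) = (Matrix.of v).det • ιMulti R n fun i => f (Pi.single i 1) := by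
  have := ((ιMulti R n).compLinearMap f).map_eq_basis_det_smul (Pi.basisFun R (Fin n)) v
  rw [Pi.basisFun_det_apply] at this
  simpa using this

theorem prod_ofFn_ι_append_mul_ι_append {k : ℕ} (v : Fin k → Fin k → R) :
    (List.ofFn fun i => ι R (Fin.append (v i) 0) * ι R (Fin.append 0 (v i))).prod =
      ((-1 : R) ^ k.choose 2 * (Matrix.of v).det ^ 2) •
        (List.ofFn fun i : Fin (k + k) => ι R (Pi.single i 1)).prod := by
  have hu : ιMulti R k (fun i => Fin.append (v i) 0) =
      (Matrix.of v).det • ιMulti R k fun i => Pi.single (Fin.castAdd k i) 1 := by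
    simpa [Fin.append_single_zero] using ιMulti_comp_linearMap_eq_det_smul
      (Fin.appendLinearMap ∘ₗ LinearMap.inl R (Fin k → R) (Fin k → R)) v
  have hw : ιMulti R k (fun i => Fin.append 0 (v i)) =
      (Matrix.of v).det • ιMulti R k fun i => Pi.single (Fin.natAdd k i) 1 := by
    simpa [Fin.append_zero_single] using ιMulti_comp_linearMap_eq_det_smul
      (Fin.appendLinearMap ∘ₗ LinearMap.inr R (Fin k → R) (Fin k → R)) v
  have hsplit : (List.ofFn fun i : Fin (k + k) => ι R (Pi.single i (1 : R))).prod =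
      (ιMulti R k fun i => Pi.single (Fin.castAdd k i) 1) *
        ιMulti R k fun i => Pi.single (Fin.natAdd k i) 1 := by
    rw [ιMulti_mul_ιMulti, Fin.append_castAdd_natAdd (f := fun i => Pi.single i (1 : R)),
      ιMulti_apply]
  rw [prod_ofFn_ι_mul_ι, hu, hw, hsplit, smul_mul_smul_comm, smul_smul, sq]

end ExteriorAlgebra

theorem stmt13 (k : ℕ) (a : Fin k → ℚ) (ha : Function.Injective a) :
    ∃ c : ℚ,
      (List.ofFn fun i =>
          ExteriorAlgebra.ι ℚ
              (Fin.append (fun j : Fin k => a i ^ (j : ℕ)) (0 : Fin k → ℚ)) *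
            ExteriorAlgebra.ι ℚ
              (Fin.append (0 : Fin k → ℚ) (fun j : Fin k => a i ^ (j : ℕ)))).prod =
        c • (List.ofFn fun i : Fin (k + k) =>
          ExteriorAlgebra.ι ℚ (Pi.single i (1 : ℚ))).prod ∧
      (-1 : ℚ) ^ (k * (k - 1) / 2) * c =
        (Matrix.of fun (j i : Fin k) => a i ^ (j : ℕ)).det ^ 2 ∧
      0 < (Matrix.of fun (j i : Fin k) => a i ^ (j : ℕ)).det ^ 2 := by
  have hdet : (Matrix.of fun (j i : Fin k) => a i ^ (j : ℕ)).det = (Matrix.vandermonde a).det :=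
    Matrix.det_transpose _
  have hdet_ne : (Matrix.vandermonde a).det ≠ 0 := Matrix.det_vandermonde_ne_zero_iff.mpr ha
  have hsign : (-1 : ℚ) ^ k.choose 2 * (-1) ^ k.choose 2 = 1 := by
    rw [← mul_pow, neg_one_mul, neg_neg, one_pow]
  refine ⟨(-1) ^ k.choose 2 * (Matrix.vandermonde a).det ^ 2,
    ExteriorAlgebra.prod_ofFn_ι_append_mul_ι_append _, ?_, ?_⟩
  · rw [hdet, ← Nat.choose_two_right, ← mul_assoc, hsign, one_mul]
  · rw [hdet]
    positivity
end

section
/- In an undirected graph G on n vertices, if the number of edges satisfies m > nk, then G contains a simple path on k+1 vertices (a path of length k). -/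
/-!
Deleting a vertex of degree at most `k` loses at most `k` edges, so it preserves `m > n k`.
Repeating this, we reach a nonempty graph in which every degree exceeds `k`; there a path can be
extended greedily, since its last vertex has more neighbours than the path has other vertices.
-/

open Finset

namespace SimpleGraph

section

variable {V : Type*} [Fintype V] [DecidableEq V] {G : SimpleGraph V} [DecidableRel G.Adj]

-- At most `p.length` vertices other than `v` lie on `p`, so some neighbour of `v` is off it.
lemma Walk.IsPath.exists_concat_isPath_of_length_lt_degree {u v : V} {p : G.Walk u v}
    (hp : p.IsPath) (hlen : p.length < G.degree v) :
    ∃ (w : V) (h : G.Adj v w), (p.concat h).IsPath := by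
  have hnsub : ¬ G.neighborFinset v ⊆ p.support.toFinset.erase v := fun hsub => by
    have := card_le_card hsub
    rw [card_neighborFinset_eq_degree, card_erase_of_mem (by simp),
      List.toFinset_card_of_nodup hp.support_nodup, length_support] at this
    omega
  obtain ⟨w, hvw, hw⟩ := not_subset.mp hnsub
  rw [mem_neighborFinset] at hvw
  exact ⟨w, hvw, hp.concat (by simpa [hvw.ne'] using hw) hvw⟩

lemma exists_isPath_length_eq_of_lt_degree {k : ℕ} (hdeg : ∀ v, k < G.degree v) (u : V) :
    ∃ (v : V) (p : G.Walk u v), p.IsPath ∧ p.length = k := by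
  induction k with
  | zero => exact ⟨u, .nil, .nil, rfl⟩
  | succ k ih =>
    obtain ⟨v, p, hp, rfl⟩ := ih fun v => k.lt_succ_self.trans (hdeg v)
    obtain ⟨w, hvw, hpw⟩ :=
      hp.exists_concat_isPath_of_length_lt_degree (Nat.lt_of_succ_lt (hdeg v))
    exact ⟨w, p.concat hvw, hpw, p.length_concat hvw⟩

end

theorem exists_isPath_length_eq_of_card_mul_lt_card_edgeFinset {V : Type*} [Fintype V]
    [DecidableEq V] (k : ℕ) (G : SimpleGraph V) [DecidableRel G.Adj]
    (h : Fintype.card V * k < #G.edgeFinset) :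
    ∃ (u v : V) (p : G.Walk u v), p.IsPath ∧ p.length = k := by
  by_cases hdeg : ∀ v, k < G.degree v
  · obtain ⟨e, -⟩ := card_pos.mp (h.trans_le' (Nat.zero_le _))
    exact ⟨_, exists_isPath_length_eq_of_lt_degree hdeg e.out.1⟩
  push Not at hdeg
  obtain ⟨x, hx⟩ := hdeg
  have hcard : Fintype.card ({x}ᶜ : Set V) + 1 = Fintype.card V := by
    rw [Fintype.card_compl_set, Set.card_singleton]
    exact Nat.sub_add_cancel (Fintype.card_pos_iff.mpr ⟨x⟩)
  have hedges : Fintype.card ({x}ᶜ : Set V) * k < #(G.induce {x}ᶜ).edgeFinset := by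
    rw [card_edgeFinset_induce_compl_singleton, card_edgeFinset_deleteIncidenceSet]
    rw [← hcard, Nat.succ_mul] at h
    omega
  obtain ⟨u, v, p, hp, hlen⟩ :=
    exists_isPath_length_eq_of_card_mul_lt_card_edgeFinset k _ hedges
  let f : G.induce {x}ᶜ ↪g G := Embedding.induce _
  exact ⟨u, v, p.map f.toHom, hp.map f.injective, (p.length_map _).trans hlen⟩
termination_by Fintype.card V
decreasing_by omega

end SimpleGraph

theorem stmt16 (n k : ℕ) (G : SimpleGraph (Fin n)) [DecidableRel G.Adj]
    (h : n * k < G.edgeFinset.card) :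
    ∃ (u v : Fin n) (p : G.Walk u v), p.IsPath ∧ p.length = k :=
  G.exists_isPath_length_eq_of_card_mul_lt_card_edgeFinset k (by rwa [Fintype.card_fin])
end
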